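/- arXiv:math/0203193 — 2 statements merged into one kernel-verified Lean document; each statement's English description precedes it below -/
import Mathlib

section
/- Let M be a von Neumann algebra acting on a complex Hilbert space H, let T ∈ M' be an element of its commutant, and let (a_{ij}), 1 ≤ i,j ≤ n, be operators in M such that ∑_{i,j} ⟨k_i, a_{ij} k_j⟩ ≥ 0 for all k_1,…,k_n ∈ H (i.e. the matrix (a_{ij}) is positive on H^n). Then for all h_1,…,h_n ∈ H, ∑_{i,j} ⟨T h_i, a_{ij} T h_j⟩ ≤ ‖T‖² ∑_{i,j} ⟨h_i, a_{ij} h_j⟩. In particular, if P : M → M is completely positive and S_1,…,S_n ∈ M, then ∑_{i,j} ⟨T h_i, P(S_i* S_j) T h_j⟩ ≤ ‖T‖² ∑_{i,j} ⟨h_i, P(S_i* S_j) h_j⟩. -/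
open scoped ComplexOrder
open ContinuousLinearMap

noncomputable section

/-- Positivity of an `n × n` operator matrix `(a i j)`, regarded as an operator on the
`n`-fold direct sum `Hⁿ`: `∑ᵢⱼ ⟨kᵢ, a i j kⱼ⟩ ≥ 0` for all `k₁, …, kₙ ∈ H`. -/
def PosOpMatrix {H : Type*} [NormedAddCommGroup H] [InnerProductSpace ℂ H] {n : ℕ}
    (a : Fin n → Fin n → (H →L[ℂ] H)) : Prop :=
  ∀ k : Fin n → H, 0 ≤ ∑ i, ∑ j, (inner ℂ (k i) (a i j (k j)) : ℂ)

/-- Complete positivity of a map relative to a von Neumann algebra `M`: positive operator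
matrices with entries in `M` are sent to positive operator matrices. -/
def IsCPOn {H : Type*} [NormedAddCommGroup H] [InnerProductSpace ℂ H] [CompleteSpace H]
    (M : VonNeumannAlgebra H) (P : (H →L[ℂ] H) → (H →L[ℂ] H)) : Prop :=
  ∀ (n : ℕ) (a : Fin n → Fin n → (H →L[ℂ] H)),
    (∀ i j, a i j ∈ M) → PosOpMatrix a → PosOpMatrix fun i j => P (a i j)

/-- Weak-operator continuity of a map on bounded subsets of `s`; for bounded linear maps on
von Neumann algebras this captures normality (σ-weak continuity). -/
def WOTContinuousOnBalls {H K : Type*} [NormedAddCommGroup H] [InnerProductSpace ℂ H]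
    [NormedAddCommGroup K] [InnerProductSpace ℂ K]
    (s : Set (H →L[ℂ] H)) (f : (H →L[ℂ] H) → (K →L[ℂ] K)) : Prop :=
  ∀ r : ℝ, ContinuousOn
    (fun T : H →WOT[ℂ] H =>
      ContinuousLinearMapWOT.ofCLM (f (ContinuousLinearMapWOT.toCLM T)))
    (ContinuousLinearMapWOT.ofCLM '' (s ∩ Metric.closedBall 0 r))

/-- The closure of a set of operators in the weak operator topology. -/
def WOTClosure {H K : Type*} [NormedAddCommGroup H] [InnerProductSpace ℂ H]
    [NormedAddCommGroup K] [InnerProductSpace ℂ K] (s : Set (H →L[ℂ] K)) : Set (H →L[ℂ] K) :=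
  ContinuousLinearMapWOT.ofCLM ⁻¹' closure (ContinuousLinearMapWOT.ofCLM '' s)

/-- A unital normal `*`-representation of (the elements of) a von Neumann algebra `M` on a
Hilbert space `K`, encoded as a function on all of `B(H)` whose properties are imposed only on
members of `M`. -/
structure IsNormalRepOn {H K : Type*} [NormedAddCommGroup H] [InnerProductSpace ℂ H]
    [CompleteSpace H] [NormedAddCommGroup K] [InnerProductSpace ℂ K] [CompleteSpace K]
    (M : VonNeumannAlgebra H) (π : (H →L[ℂ] H) → (K →L[ℂ] K)) : Prop where
  map_add : ∀ S ∈ M, ∀ T ∈ M, π (S + T) = π S + π T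
  map_smul : ∀ (c : ℂ), ∀ T ∈ M, π (c • T) = c • π T
  map_mul : ∀ S ∈ M, ∀ T ∈ M, π (S * T) = π S * π T
  map_star : ∀ T ∈ M, π (star T) = star (π T)
  map_one : π 1 = 1
  normal : WOTContinuousOnBalls (M : Set (H →L[ℂ] H)) π

/-- A completely positive linear map of a von Neumann algebra `M` into itself. -/
structure IsCPMapOn {H : Type*} [NormedAddCommGroup H] [InnerProductSpace ℂ H] [CompleteSpace H]
    (M : VonNeumannAlgebra H) (P : (H →L[ℂ] H) → (H →L[ℂ] H)) : Prop where
  map_mem : ∀ T ∈ M, P T ∈ M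
  map_add : ∀ S ∈ M, ∀ T ∈ M, P (S + T) = P S + P T
  map_smul : ∀ (c : ℂ), ∀ T ∈ M, P (c • T) = c • P T
  cp : IsCPOn M P

/-- A normal, unital, completely positive map on a von Neumann algebra `M`. -/
structure IsUNCPMapOn {H : Type*} [NormedAddCommGroup H] [InnerProductSpace ℂ H] [CompleteSpace H]
    (M : VonNeumannAlgebra H) (P : (H →L[ℂ] H) → (H →L[ℂ] H))
    extends IsCPMapOn M P : Prop where
  map_one : P 1 = 1
  normal : WOTContinuousOnBalls (M : Set (H →L[ℂ] H)) P

/-- A Stinespring triple `(π, K, W)` for `P`: `π` is a unital normal `*`-representation of `M`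
on `K`, `W : H → K` is an isometry, and `P T = W* (π T) W` for `T ∈ M`. -/
structure IsStinespring {H K : Type*} [NormedAddCommGroup H] [InnerProductSpace ℂ H]
    [CompleteSpace H] [NormedAddCommGroup K] [InnerProductSpace ℂ K] [CompleteSpace K]
    (M : VonNeumannAlgebra H) (P : (H →L[ℂ] H) → (H →L[ℂ] H))
    (π : (H →L[ℂ] H) → (K →L[ℂ] K)) (W : H →L[ℂ] K) : Prop where
  rep : IsNormalRepOn M π
  isometry : ∀ h : H, ‖W h‖ = ‖h‖
  dilation : ∀ T ∈ M, P T = ContinuousLinearMap.adjoint W ∘L (π T ∘L W)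

/-- A minimal Stinespring triple: additionally `{π(T) W h}` has dense span in `K`. -/
structure IsMinimalStinespring {H K : Type*} [NormedAddCommGroup H] [InnerProductSpace ℂ H]
    [CompleteSpace H] [NormedAddCommGroup K] [InnerProductSpace ℂ K] [CompleteSpace K]
    (M : VonNeumannAlgebra H) (P : (H →L[ℂ] H) → (H →L[ℂ] H))
    (π : (H →L[ℂ] H) → (K →L[ℂ] K)) (W : H →L[ℂ] K)
    extends IsStinespring M P π W : Prop where
  minimal :
    (Submodule.span ℂ {k : K | ∃ T ∈ M, ∃ h : H, k = π T (W h)}).topologicalClosure = ⊤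

/-- The `P`-boundedness condition with constant `C` for an operator `Y ∈ B(H)`:
`‖∑ᵢ Sᵢ Y* hᵢ‖² ≤ C ∑ᵢⱼ ⟨hᵢ, P(Sᵢ* Sⱼ) hⱼ⟩` for all `Sᵢ ∈ M` and `hᵢ ∈ H`. -/
def PBound {H : Type*} [NormedAddCommGroup H] [InnerProductSpace ℂ H] [CompleteSpace H]
    (M : VonNeumannAlgebra H) (P : (H →L[ℂ] H) → (H →L[ℂ] H))
    (Y : H →L[ℂ] H) (C : ℝ) : Prop :=
  ∀ (n : ℕ) (S : Fin n → (H →L[ℂ] H)), (∀ i, S i ∈ M) → ∀ h : Fin n → H,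
    ((‖∑ i, S i (ContinuousLinearMap.adjoint Y (h i))‖ ^ 2 : ℝ) : ℂ) ≤
      (C : ℂ) * ∑ i, ∑ j, (inner ℂ (h i) (P (star (S i) * S j) (h j)) : ℂ)

/-- The Arveson correspondence of `P`: all `Y ∈ B(H)` satisfying the `P`-boundedness
condition with some nonnegative constant. -/
def ArvesonCorrespondence {H : Type*} [NormedAddCommGroup H] [InnerProductSpace ℂ H]
    [CompleteSpace H] (M : VonNeumannAlgebra H) (P : (H →L[ℂ] H) → (H →L[ℂ] H)) :
    Set (H →L[ℂ] H) :=
  {Y | ∃ C : ℝ, 0 ≤ C ∧ PBound M P Y C}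

/-- A cp-semigroup on `M`: a semigroup `{P_t}_{t ≥ 0}` of unital, normal, completely positive
maps on `M` with `P_0 = id`. -/
structure IsCpSemigroup {H : Type*} [NormedAddCommGroup H] [InnerProductSpace ℂ H]
    [CompleteSpace H] (M : VonNeumannAlgebra H)
    (P : ℝ → (H →L[ℂ] H) → (H →L[ℂ] H)) : Prop where
  uncp : ∀ t : ℝ, 0 ≤ t → IsUNCPMapOn M (P t)
  id_zero : ∀ T ∈ M, P 0 T = T
  comp : ∀ s t : ℝ, 0 ≤ s → 0 ≤ t → ∀ T ∈ M, P (t + s) T = P t (P s T)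

/-- Weak continuity of a cp-semigroup: `t ↦ ⟨P_t(a) h, k⟩` is continuous on `[0, ∞)`. -/
def IsWeaklyContinuousSemigroup {H : Type*} [NormedAddCommGroup H] [InnerProductSpace ℂ H]
    [CompleteSpace H] (M : VonNeumannAlgebra H)
    (P : ℝ → (H →L[ℂ] H) → (H →L[ℂ] H)) : Prop :=
  ∀ T ∈ M, ∀ h k : H,
    ContinuousOn (fun t : ℝ => (inner ℂ ((P t T) h) k : ℂ)) (Set.Ici (0 : ℝ))

/-- A semigroup `{α_t}_{t ≥ 0}` of unital, normal `*`-endomorphisms of a von Neumann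
algebra `R`, with `α_0 = id`. -/
structure IsEndoSemigroup {K : Type*} [NormedAddCommGroup K] [InnerProductSpace ℂ K]
    [CompleteSpace K] (R : VonNeumannAlgebra K)
    (α : ℝ → (K →L[ℂ] K) → (K →L[ℂ] K)) : Prop where
  rep : ∀ t : ℝ, 0 ≤ t → IsNormalRepOn R (α t)
  map_mem : ∀ t : ℝ, 0 ≤ t → ∀ S ∈ R, α t S ∈ R
  id_zero : ∀ S ∈ R, α 0 S = S
  comp : ∀ s t : ℝ, 0 ≤ s → 0 ≤ t → ∀ S ∈ R, α (t + s) S = α t (α s S)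

/-!
Encode `(a i j)` as the operator `A = opMatrix a` on `ℓ²(Fin n, H)`; positivity of the matrix is
`0 ≤ A`. Since `T` commutes with every entry, `D = T ⊕ ⋯ ⊕ T` commutes with `A` and hence with
`√A`, so `⟪D h, A (D h)⟫ = ‖√A (D h)‖² = ‖D (√A h)‖² ≤ ‖T‖² ‖√A h‖² = ‖T‖² ⟪h, A h⟫`.
The second claim is the first one applied to `(P (Sᵢ* Sⱼ))`, which is positive by complete
positivity since the Gram matrix `(Sᵢ* Sⱼ)` is.
-/

open scoped InnerProductSpace

section SqrtCommute

variable {E : Type*} [NormedAddCommGroup E] [InnerProductSpace ℂ E]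

lemma ContinuousLinearMap.isPositive_of_inner_nonneg {A : E →L[ℂ] E} (h : ∀ x, 0 ≤ ⟪x, A x⟫_ℂ) :
    A.IsPositive := by
  refine (isPositive_iff_complex A).2 fun x => ?_
  obtain ⟨hre, him⟩ := Complex.nonneg_iff.1 (h x)
  rw [← inner_conj_symm (A x) x, RCLike.re_to_complex, Complex.conj_re]
  exact ⟨Complex.ext (Complex.ofReal_re _)
    (by simp only [Complex.ofReal_im, Complex.conj_im, ← him, neg_zero]), hre⟩

variable [CompleteSpace E]

lemma inner_apply_eq_norm_sqrt_apply_sq {A : E →L[ℂ] E} (hA : 0 ≤ A) (x : E) :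
    ⟪x, A x⟫_ℂ = ((‖CFC.sqrt A x‖ ^ 2 : ℝ) : ℂ) := by
  have hQ : IsSelfAdjoint (CFC.sqrt A) := .of_nonneg (CFC.sqrt_nonneg A)
  conv_lhs =>
    rw [← CFC.sqrt_mul_sqrt_self A hA, mul_apply_eq_comp, ← adjoint_inner_left, hQ.adjoint_eq]
  rw [inner_self_eq_norm_sq_to_K]
  norm_cast

theorem inner_map_apply_map_le_of_commute {A D : E →L[ℂ] E} (hA : 0 ≤ A) (hDA : Commute D A)
    {c : ℝ} (hD : ∀ x, ‖D x‖ ≤ c * ‖x‖) (x : E) :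
    ⟪D x, A (D x)⟫_ℂ ≤ ((c ^ 2 : ℝ) : ℂ) * ⟪x, A x⟫_ℂ := by
  have hswap : CFC.sqrt A (D x) = D (CFC.sqrt A x) :=
    congr($((hDA.symm.cfcₙ_nnreal NNReal.sqrt).eq) x)
  rw [inner_apply_eq_norm_sqrt_apply_sq hA, inner_apply_eq_norm_sqrt_apply_sq hA,
    hswap, ← Complex.ofReal_mul, Complex.real_le_real, ← mul_pow]
  exact pow_le_pow_left₀ (norm_nonneg _) (hD _) 2

end SqrtCommute

section OperatorMatrix

variable {H : Type*} [NormedAddCommGroup H] [InnerProductSpace ℂ H] {ι : Type*}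

def diagOp (T : H →L[ℂ] H) : PiLp 2 (fun _ : ι => H) →L[ℂ] PiLp 2 (fun _ : ι => H) :=
  (PiLp.continuousLinearEquiv 2 ℂ _).symm.toContinuousLinearMap ∘L
    ContinuousLinearMap.pi fun i => T ∘L PiLp.proj 2 _ i

@[simp]
lemma diagOp_apply (T : H →L[ℂ] H) (x : PiLp 2 (fun _ : ι => H)) (i : ι) :
    diagOp T x i = T (x i) :=
  rfl

variable [Fintype ι]

def opMatrix (a : ι → ι → H →L[ℂ] H) : PiLp 2 (fun _ : ι => H) →L[ℂ] PiLp 2 (fun _ : ι => H) :=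
  (PiLp.continuousLinearEquiv 2 ℂ _).symm.toContinuousLinearMap ∘L
    ContinuousLinearMap.pi fun i => ∑ j, a i j ∘L PiLp.proj 2 _ j

@[simp]
lemma opMatrix_apply (a : ι → ι → H →L[ℂ] H) (x : PiLp 2 (fun _ : ι => H)) (i : ι) :
    opMatrix a x i = ∑ j, a i j (x j) := by
  simp [opMatrix]

lemma inner_opMatrix_apply (a : ι → ι → H →L[ℂ] H) (x : PiLp 2 (fun _ : ι => H)) :
    ⟪x, opMatrix a x⟫_ℂ = ∑ i, ∑ j, ⟪x i, a i j (x j)⟫_ℂ := by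
  simp only [PiLp.inner_apply, opMatrix_apply, inner_sum]

lemma opMatrix_nonneg {n : ℕ} {a : Fin n → Fin n → H →L[ℂ] H} (ha : PosOpMatrix a) :
    0 ≤ opMatrix a := by
  rw [nonneg_iff_isPositive]
  exact isPositive_of_inner_nonneg fun x => (inner_opMatrix_apply a x).symm ▸ ha x

lemma norm_diagOp_apply_le (T : H →L[ℂ] H) (x : PiLp 2 (fun _ : ι => H)) :
    ‖diagOp T x‖ ≤ ‖T‖ * ‖x‖ := by
  refine le_of_sq_le_sq ?_ (by positivity)
  rw [PiLp.norm_sq_eq_of_L2, mul_pow, PiLp.norm_sq_eq_of_L2, Finset.mul_sum]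
  refine Finset.sum_le_sum fun i _ => ?_
  rw [diagOp_apply, ← mul_pow]
  exact pow_le_pow_left₀ (norm_nonneg _) (T.le_opNorm (x i)) 2

lemma commute_diagOp_opMatrix {T : H →L[ℂ] H} {a : ι → ι → H →L[ℂ] H}
    (h : ∀ i j, Commute T (a i j)) : Commute (diagOp T) (opMatrix a) := by
  ext x i
  simp only [mul_apply_eq_comp, diagOp_apply, opMatrix_apply, map_sum]
  exact Finset.sum_congr rfl fun j _ => congr($((h i j).eq) (x j))

end OperatorMatrix

section PosOpMatrix

variable {H : Type*} [NormedAddCommGroup H] [InnerProductSpace ℂ H] [CompleteSpace H]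
  {n : ℕ}

theorem PosOpMatrix.inner_map_le_of_commute {a : Fin n → Fin n → H →L[ℂ] H}
    (ha : PosOpMatrix a) {T : H →L[ℂ] H} (hT : ∀ i j, Commute T (a i j)) (h : Fin n → H) :
    ∑ i, ∑ j, ⟪T (h i), a i j (T (h j))⟫_ℂ ≤
      ((‖T‖ ^ 2 : ℝ) : ℂ) * ∑ i, ∑ j, ⟪h i, a i j (h j)⟫_ℂ := by
  have key := inner_map_apply_map_le_of_commute (opMatrix_nonneg ha)
    (commute_diagOp_opMatrix hT) (norm_diagOp_apply_le T) (WithLp.toLp 2 h)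
  simpa only [inner_opMatrix_apply, diagOp_apply] using key

theorem posOpMatrix_star_mul (S : Fin n → H →L[ℂ] H) :
    PosOpMatrix fun i j => star (S i) * S j := by
  intro k
  calc (0 : ℂ) ≤ ⟪∑ i, S i (k i), ∑ j, S j (k j)⟫_ℂ := by
        rw [inner_self_eq_norm_sq_to_K, ← RCLike.ofReal_pow, RCLike.ofReal_nonneg]; positivity
    _ = ∑ i, ∑ j, ⟪k i, (star (S i) * S j) (k j)⟫_ℂ := by
      simp only [sum_inner, inner_sum, mul_apply_eq_comp, star_eq_adjoint,
        adjoint_inner_right]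
      exact Finset.sum_comm

end PosOpMatrix

/-- for `T` in the commutant of `M` and a positive operator matrix `(a i j)`
with entries in `M`, `∑ᵢⱼ ⟨T hᵢ, a i j (T hⱼ)⟩ ≤ ‖T‖² ∑ᵢⱼ ⟨hᵢ, a i j hⱼ⟩`; in particular this
holds for the matrices `(P (Sᵢ* Sⱼ))` arising from a completely positive map `P`. -/
theorem commutant_compression_le {H : Type*} [NormedAddCommGroup H] [InnerProductSpace ℂ H]
    [CompleteSpace H] (M : VonNeumannAlgebra H) (T : H →L[ℂ] H) (hT : T ∈ M.commutant) :
    (∀ (n : ℕ) (a : Fin n → Fin n → (H →L[ℂ] H)), (∀ i j, a i j ∈ M) → PosOpMatrix a →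
      ∀ h : Fin n → H,
        ∑ i, ∑ j, (inner ℂ (T (h i)) (a i j (T (h j))) : ℂ) ≤
          ((‖T‖ ^ 2 : ℝ) : ℂ) * ∑ i, ∑ j, (inner ℂ (h i) (a i j (h j)) : ℂ)) ∧
    (∀ P : (H →L[ℂ] H) → (H →L[ℂ] H), IsCPMapOn M P →
      ∀ (n : ℕ) (S : Fin n → (H →L[ℂ] H)), (∀ i, S i ∈ M) → ∀ h : Fin n → H,
        ∑ i, ∑ j, (inner ℂ (T (h i)) (P (star (S i) * S j) (T (h j))) : ℂ) ≤
          ((‖T‖ ^ 2 : ℝ) : ℂ) * ∑ i, ∑ j, (inner ℂ (h i) (P (star (S i) * S j) (h j)) : ℂ)) := by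
  have hcomm : ∀ a ∈ M, Commute T a := fun a ha =>
    (VonNeumannAlgebra.mem_commutant_iff.1 hT a ha).symm
  refine ⟨fun n a haM ha h => ha.inner_map_le_of_commute (fun i j => hcomm _ (haM i j)) h,
    fun P hP n S hS h => ?_⟩
  have hmem : ∀ i j, star (S i) * S j ∈ M := fun i j => mul_mem (star_mem (hS i)) (hS j)
  exact (hP.cp n _ hmem (posOpMatrix_star_mul S)).inner_map_le_of_commute
    (fun i j => hcomm _ (hP.map_mem _ (hmem i j))) h
end
end

section
/- Let M be a von Neumann algebra acting on a complex Hilbert space H, let P : M → M be a completely positive linear map, and let Y ∈ B(H) satisfy the P-boundedness condition with constant C ≥ 0. Then for every n ≥ 1, every n×n matrix (a_{ij}) of operators in M that is positive as an operator on H^n, and all h_1,…,h_n ∈ H, one has ∑_{i,j} ⟨Y* h_i, a_{ij} Y* h_j⟩ ≤ C ∑_{i,j} ⟨h_i, P(a_{ij}) h_j⟩. -/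
/-!
View the matrix `a` as the operator `A = ofBlocks a` on `Hⁿ`; positivity of `a` says `0 ≤ A`.
Its square root `B = √A` commutes with everything that commutes with `A`, in particular with the
diagonal operators `m ⊕ ⋯ ⊕ m` for `m ∈ M'`, so the entries `b k i` of `B` lie in `M'' = M`, and
`B* B = A` reads `a i j = ∑ₖ (b k i)* (b k j)`. Hence
`∑ᵢⱼ ⟨Y* hᵢ, a i j Y* hⱼ⟩ = ∑ₖ ‖∑ᵢ b k i Y* hᵢ‖²`, the `P`-boundedness condition bounds the `k`-th
term by `C ∑ᵢⱼ ⟨hᵢ, P((b k i)* b k j) hⱼ⟩`, and additivity of `P` sums these bounds to the claim.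
-/

open scoped ComplexOrder
open ContinuousLinearMap

noncomputable section

open scoped Matrix

theorem ContinuousLinearMap.nonneg_iff_forall_inner_nonneg {E : Type*} [NormedAddCommGroup E]
    [InnerProductSpace ℂ E] [CompleteSpace E] (T : E →L[ℂ] E) :
    0 ≤ T ↔ ∀ x, 0 ≤ inner ℂ x (T x) := by
  rw [nonneg_iff_isPositive]
  refine ⟨fun hT x => hT.inner_nonneg_right x, fun hT => ?_⟩
  have hsymm : ∀ x, inner ℂ (T x) x = inner ℂ x (T x) := fun x => by
    rw [← inner_conj_symm, Complex.conj_eq_iff_im]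
    exact (Complex.nonneg_iff.1 (hT x)).2.symm
  rw [isPositive_iff]
  refine ⟨(LinearMap.isSymmetric_iff_inner_map_self_real _).2 fun x => ?_, fun x => ?_⟩
  · exact (inner_conj_symm _ _).trans (hsymm x).symm
  · exact (hsymm x).symm ▸ hT x

namespace BlockOperator

variable {H : Type*} [NormedAddCommGroup H] [InnerProductSpace ℂ H] {ι : Type*}

local notation "𝓗" => PiLp 2 (fun _ : ι => H)

def toBlocks [DecidableEq ι] (T : 𝓗 →L[ℂ] 𝓗) : Matrix ι ι (H →L[ℂ] H) := fun i j =>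
  PiLp.proj 2 (fun _ : ι => H) i ∘L T ∘L
    (PiLp.continuousLinearEquiv 2 ℂ _).symm.toContinuousLinearMap ∘L
      ContinuousLinearMap.single ℂ (fun _ : ι => H) j

@[simp]
lemma toBlocks_apply [DecidableEq ι] (T : 𝓗 →L[ℂ] 𝓗) (i j : ι) (h : H) :
    toBlocks T i j h = T (PiLp.single 2 j h) i := rfl

variable [Fintype ι]

def ofBlocks (a : Matrix ι ι (H →L[ℂ] H)) : 𝓗 →L[ℂ] 𝓗 :=
  (PiLp.continuousLinearEquiv 2 ℂ _).symm.toContinuousLinearMap ∘L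
    ContinuousLinearMap.pi fun i => ∑ j, a i j ∘L PiLp.proj 2 (fun _ : ι => H) j

@[simp]
lemma ofBlocks_apply (a : Matrix ι ι (H →L[ℂ] H)) (x : 𝓗) (i : ι) :
    ofBlocks a x i = ∑ j, a i j (x j) := by
  simp [ofBlocks]

lemma toBlocks_ofBlocks [DecidableEq ι] (a : Matrix ι ι (H →L[ℂ] H)) :
    toBlocks (ofBlocks a) = a := by
  ext i j h
  simp [PiLp.single_apply, apply_ite]

lemma ofBlocks_toBlocks [DecidableEq ι] (T : 𝓗 →L[ℂ] 𝓗) : ofBlocks (toBlocks T) = T := by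
  ext x i
  have hx : x = ∑ j, PiLp.single 2 j (x j) := by ext; simp
  conv_rhs => rw [hx]
  simp

lemma ofBlocks_injective :
    Function.Injective (ofBlocks : Matrix ι ι (H →L[ℂ] H) → 𝓗 →L[ℂ] 𝓗) := by
  classical
  exact Function.LeftInverse.injective toBlocks_ofBlocks

lemma ofBlocks_mul (a b : Matrix ι ι (H →L[ℂ] H)) :
    ofBlocks (a * b) = ofBlocks a * ofBlocks b := by
  ext x i
  simp only [ofBlocks_apply, Matrix.mul_apply, mul_apply_eq_comp, map_sum, sum_apply]
  exact Finset.sum_comm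

lemma inner_ofBlocks (a : Matrix ι ι (H →L[ℂ] H)) (x y : 𝓗) :
    inner ℂ x (ofBlocks a y) = ∑ i, ∑ j, inner ℂ (x i) (a i j (y j)) := by
  simp [PiLp.inner_apply, inner_sum]

lemma star_ofBlocks [CompleteSpace H] (a : Matrix ι ι (H →L[ℂ] H)) :
    star (ofBlocks a) = ofBlocks aᴴ := by
  rw [star_eq_adjoint, eq_comm, eq_adjoint_iff]
  intro x y
  rw [inner_ofBlocks]
  simp only [PiLp.inner_apply, ofBlocks_apply, sum_inner, Matrix.conjTranspose_apply,
    star_eq_adjoint, adjoint_inner_left]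
  exact Finset.sum_comm

lemma commute_ofBlocks_diagonal_iff [DecidableEq ι] (a : Matrix ι ι (H →L[ℂ] H))
    (m : H →L[ℂ] H) :
    Commute (ofBlocks a) (ofBlocks (Matrix.diagonal fun _ => m)) ↔ ∀ i j, Commute (a i j) m := by
  rw [Commute, SemiconjBy, ← ofBlocks_mul, ← ofBlocks_mul, ofBlocks_injective.eq_iff,
    ← Matrix.ext_iff]
  simp only [Matrix.mul_diagonal, Matrix.diagonal_mul, Commute, SemiconjBy]

lemma forall_mem_iff_commute_ofBlocks_diagonal [CompleteSpace H] [DecidableEq ι]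
    (M : VonNeumannAlgebra H) (a : Matrix ι ι (H →L[ℂ] H)) :
    (∀ i j, a i j ∈ M) ↔
      ∀ m ∈ M.commutant, Commute (ofBlocks a) (ofBlocks (Matrix.diagonal fun _ => m)) := by
  conv_lhs => rw [← M.commutant_commutant]
  simp only [commute_ofBlocks_diagonal_iff]
  simp only [VonNeumannAlgebra.mem_commutant_iff, Commute, SemiconjBy]
  exact ⟨fun h m hm i j => (h i j m hm).symm, fun h i j m hm => (h m hm i j).symm⟩

lemma ofBlocks_nonneg_iff [CompleteSpace H] (a : Matrix ι ι (H →L[ℂ] H)) :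
    0 ≤ ofBlocks a ↔ ∀ x : 𝓗, 0 ≤ ∑ i, ∑ j, inner ℂ (x i) (a i j (x j)) := by
  simp only [nonneg_iff_forall_inner_nonneg, inner_ofBlocks]

set_option synthInstance.maxHeartbeats 100000 in
theorem exists_conjTranspose_mul_eq [CompleteSpace H] (M : VonNeumannAlgebra H)
    {a : Matrix ι ι (H →L[ℂ] H)} (haM : ∀ i j, a i j ∈ M) (ha : 0 ≤ ofBlocks a) :
    ∃ b : Matrix ι ι (H →L[ℂ] H), (∀ i j, b i j ∈ M) ∧ bᴴ * b = a := by
  classical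
  set b := toBlocks (CFC.sqrt (ofBlocks a))
  have hb : ofBlocks b = CFC.sqrt (ofBlocks a) := ofBlocks_toBlocks _
  refine ⟨b, ?_, ?_⟩
  · rw [forall_mem_iff_commute_ofBlocks_diagonal M, hb, CFC.sqrt_eq_cfc]
    intro m hm
    exact ((forall_mem_iff_commute_ofBlocks_diagonal M a).1 haM m hm).cfc_nnreal _
  · apply ofBlocks_injective
    rw [ofBlocks_mul, ← star_ofBlocks, hb, (CFC.sqrt_nonneg (ofBlocks a)).isSelfAdjoint.star_eq,
      CFC.sqrt_mul_sqrt_self _ ha]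

end BlockOperator

theorem map_sum_of_map_add_mem {A B S ι : Type*} [AddCommMonoid A] [AddCancelCommMonoid B]
    [SetLike S A] [AddSubmonoidClass S A] {s : S} {f : A → B}
    (hf : ∀ x ∈ s, ∀ y ∈ s, f (x + y) = f x + f y) (t : Finset ι) {g : ι → A}
    (hg : ∀ i ∈ t, g i ∈ s) : f (∑ i ∈ t, g i) = ∑ i ∈ t, f (g i) := by
  classical
  induction t using Finset.induction_on with
  | empty =>
    have h0 := hf 0 (zero_mem s) 0 (zero_mem s)
    rw [add_zero] at h0
    simpa using h0
  | insert i t hi ih =>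
    rw [Finset.sum_insert hi, Finset.sum_insert hi,
      hf _ (hg i (Finset.mem_insert_self i t)) _
        (sum_mem fun j hj => hg j (Finset.mem_insert_of_mem hj)),
      ih fun j hj => hg j (Finset.mem_insert_of_mem hj)]

theorem Matrix.sum_inner_conjTranspose_mul_apply {H κ ι : Type*} [NormedAddCommGroup H]
    [InnerProductSpace ℂ H] [CompleteSpace H] [Fintype κ] [Fintype ι]
    (b : Matrix κ ι (H →L[ℂ] H)) (x : ι → H) :
    ∑ i, ∑ j, inner ℂ (x i) ((bᴴ * b) i j (x j)) = ∑ k, ((‖∑ i, b k i (x i)‖ ^ 2 : ℝ) : ℂ) := by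
  have hnorm (v : H) : ((‖v‖ ^ 2 : ℝ) : ℂ) = inner ℂ v v := by
    rw [inner_self_eq_norm_sq_to_K]; norm_cast
  simp only [Matrix.mul_apply, Matrix.conjTranspose_apply, _root_.sum_apply, mul_apply_eq_comp,
    star_eq_adjoint, inner_sum, adjoint_inner_right, hnorm, sum_inner]
  exact Finset.sum_comm.trans
    ((Finset.sum_congr rfl fun _ _ => Finset.sum_comm).trans Finset.sum_comm)

theorem PBound.sum_inner_conjTranspose_mul_le {H : Type*} [NormedAddCommGroup H]
    [InnerProductSpace ℂ H] [CompleteSpace H] {M : VonNeumannAlgebra H}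
    {P : (H →L[ℂ] H) → (H →L[ℂ] H)} {Y : H →L[ℂ] H} {C : ℝ} (hY : PBound M P Y C)
    (hP : ∀ S ∈ M, ∀ T ∈ M, P (S + T) = P S + P T) {n : ℕ}
    (b : Matrix (Fin n) (Fin n) (H →L[ℂ] H)) (hb : ∀ k i, b k i ∈ M) (h : Fin n → H) :
    ∑ i, ∑ j, inner ℂ (adjoint Y (h i)) ((bᴴ * b) i j (adjoint Y (h j))) ≤
      (C : ℂ) * ∑ i, ∑ j, inner ℂ (h i) (P ((bᴴ * b) i j) (h j)) := by
  rw [Matrix.sum_inner_conjTranspose_mul_apply]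
  calc _ ≤ ∑ k, (C : ℂ) * ∑ i, ∑ j, inner ℂ (h i) (P (star (b k i) * b k j) (h j)) :=
        Finset.sum_le_sum fun k _ => hY n (b k) (hb k) h
    _ = _ := by
      rw [← Finset.mul_sum]
      congr 1
      simp only [Matrix.mul_apply, Matrix.conjTranspose_apply,
        map_sum_of_map_add_mem hP _ fun k _ => mul_mem (star_mem (hb k _)) (hb k _), sum_apply,
        inner_sum]
      exact Finset.sum_comm.trans (Finset.sum_congr rfl fun _ _ => Finset.sum_comm)

theorem pbound_posMatrix_general {H : Type*} [NormedAddCommGroup H] [InnerProductSpace ℂ H]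
    [CompleteSpace H] (M : VonNeumannAlgebra H)
    (P : (H →L[ℂ] H) → (H →L[ℂ] H)) (hP : IsCPMapOn M P)
    (Y : H →L[ℂ] H) (C : ℝ) (hY : PBound M P Y C) :
    ∀ n : ℕ, 1 ≤ n → ∀ a : Fin n → Fin n → (H →L[ℂ] H), (∀ i j, a i j ∈ M) →
      PosOpMatrix a → ∀ h : Fin n → H,
      ∑ i, ∑ j, (inner ℂ (ContinuousLinearMap.adjoint Y (h i))
          (a i j (ContinuousLinearMap.adjoint Y (h j))) : ℂ) ≤
        (C : ℂ) * ∑ i, ∑ j, (inner ℂ (h i) (P (a i j) (h j)) : ℂ) := by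
  intro n _ a haM hpos h
  obtain ⟨b, hbM, rfl⟩ := BlockOperator.exists_conjTranspose_mul_eq M haM
    ((BlockOperator.ofBlocks_nonneg_iff a).2 fun x => hpos x)
  exact hY.sum_inner_conjTranspose_mul_le hP.map_add b hbM h

/-- an operator `Y` satisfying the `P`-boundedness condition with constant `C`
satisfies the corresponding inequality for every positive operator matrix with entries
in `M`. -/
theorem pbound_posMatrix {H : Type*} [NormedAddCommGroup H] [InnerProductSpace ℂ H]
    [CompleteSpace H] (M : VonNeumannAlgebra H)
    (P : (H →L[ℂ] H) → (H →L[ℂ] H)) (hP : IsCPMapOn M P)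
    (Y : H →L[ℂ] H) (C : ℝ) (hC : 0 ≤ C) (hY : PBound M P Y C) :
    ∀ n : ℕ, 1 ≤ n → ∀ a : Fin n → Fin n → (H →L[ℂ] H), (∀ i j, a i j ∈ M) →
      PosOpMatrix a → ∀ h : Fin n → H,
      ∑ i, ∑ j, (inner ℂ (ContinuousLinearMap.adjoint Y (h i))
          (a i j (ContinuousLinearMap.adjoint Y (h j))) : ℂ) ≤
        (C : ℂ) * ∑ i, ∑ j, (inner ℂ (h i) (P (a i j) (h j)) : ℂ) :=
  pbound_posMatrix_general M P hP Y C hY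
end
end
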